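/- If F is an intersecting family of perfect matchings of K_{2n}, then |F| ≤ (2n-3)!!. -/

import Mathlib

open scoped Nat

/-- A perfect matching of `K_{2n}` viewed as a fixed-point-free involution of the
vertex set `Fin (2*n)`. -/
def IsPM {N : ℕ} (f : Equiv.Perm (Fin N)) : Prop :=
  Function.Involutive f ∧ ∀ i, f i ≠ i

/-- The set of perfect matchings of `K_{2n}`. -/
abbrev PMV (n : ℕ) := {f : Equiv.Perm (Fin (2 * n)) // IsPM f}

/-!
The clique–coclique bound. Conjugation by `Perm (Fin (2n))` acts transitively on perfect
matchings and preserves edge-disjointness, so an intersecting family `F` meets every conjugate of a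
family `C` of pairwise edge-disjoint matchings in at most one member. Averaging over the group
gives `|C| · |F| ≤ (2n-1)‼`, the number of perfect matchings, and the round-robin
1-factorization of `K_{2n}` provides such a `C` with `|C| = 2n - 1`.
-/

open Finset Equiv

namespace MulAction
variable {G X : Type*} [Group G] [MulAction G X] [IsPretransitive G X]

theorem card_filter_smul_eq_mul_card [Fintype G] [Fintype X] [DecidableEq X] (x y : X) :
    #{g : G | g • x = y} * Fintype.card X = Fintype.card G := by
  obtain ⟨h, rfl⟩ := exists_smul_eq G x y
  have hfiber : #{g : G | g • x = h • x} = Nat.card (stabilizer G x) := by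
    rw [← Nat.card_eq_finsetCard]
    refine Nat.card_congr
      { toFun g := ⟨h⁻¹ * g.1, by simp [mem_stabilizer_iff, mul_smul, (mem_filter.1 g.2).2]⟩
        invFun g := ⟨h * g.1, by simp [mul_smul, mem_stabilizer_iff.1 g.2]⟩
        left_inv g := by simp
        right_inv g := by simp }
  rw [hfiber, ← Nat.card_eq_fintype_card, ← index_stabilizer_of_transitive G x,
    Subgroup.card_mul_index, Nat.card_eq_fintype_card]

end MulAction

theorem SimpleGraph.card_mul_card_le_card_of_isClique_of_isIndepSet {G X : Type*} [Group G]
    [Fintype G] [MulAction G X] [MulAction.IsPretransitive G X] [Fintype X] {Γ : SimpleGraph X}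
    (hΓ : ∀ (g : G) {x y : X}, Γ.Adj x y → Γ.Adj (g • x) (g • y))
    {C I : Finset X} (hC : Γ.IsClique (C : Set X)) (hI : Γ.IsIndepSet (I : Set X)) :
    #C * #I ≤ Fintype.card X := by
  -- not `classical`: the filters must decide equality through a `DecidableEq X` instance for
  -- `card_filter_smul_eq_mul_card` to rewrite them
  have := Classical.decEq X
  have hmeet (g : G) : #{c ∈ C | g • c ∈ I} ≤ 1 := by
    refine card_le_one.2 fun a ha b hb => by_contra fun hab => ?_
    simp only [mem_filter] at ha hb
    have hadj := hΓ g (hC ha.1 hb.1 hab)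
    exact hI ha.2 hb.2 hadj.ne hadj
  have hswap :
      ∑ g : G, #{c ∈ C | g • c ∈ I} = ∑ c ∈ C, ∑ i ∈ I, #{g : G | g • c = i} := by
    simp only [card_filter]
    rw [sum_comm]
    refine sum_congr rfl fun c _ => ?_
    rw [sum_comm]
    simp [sum_ite_eq]
  refine Nat.le_of_mul_le_mul_right (c := Fintype.card G) ?_ Fintype.card_pos
  calc #C * #I * Fintype.card G
      = ∑ g : G, #{c ∈ C | g • c ∈ I} * Fintype.card X := by
        rw [← sum_mul, hswap]
        simp only [sum_mul, MulAction.card_filter_smul_eq_mul_card, sum_const, smul_eq_mul,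
          mul_assoc]
    _ ≤ ∑ _g : G, 1 * Fintype.card X := by gcongr; exact hmeet _
    _ = Fintype.card X * Fintype.card G := by simp [mul_comm]

theorem Nat.factorial_two_mul_eq_mul_doubleFactorial (n : ℕ) :
    (2 * n)! = (2 * n)‼ * (2 * n - 1)‼ := by
  cases n with
  | zero => rfl
  | succ k =>
    rw [show 2 * (k + 1) = 2 * k + 1 + 1 by ring, Nat.factorial_eq_mul_doubleFactorial]
    rfl

instance {N : ℕ} : DecidablePred (@IsPM N) :=
  fun _ => by unfold IsPM Function.Involutive; infer_instance

theorem isPM_iff_cycleType_eq {n : ℕ} (f : Perm (Fin (2 * n))) :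
    IsPM f ↔ f.cycleType = Multiset.replicate n 2 := by
  have hinv : Function.Involutive f ↔ f ^ 2 = 1 := by
    simp [Function.Involutive, Perm.ext_iff, sq]
  have hfix : (∀ i, f i ≠ i) ↔ f.cycleType.sum = 2 * n := calc
    _ ↔ f.support = univ := by simp [eq_univ_iff_forall]
    _ ↔ #f.support = Fintype.card (Fin (2 * n)) := (card_eq_iff_eq_univ _).symm
    _ ↔ _ := by rw [Perm.sum_cycleType, Fintype.card_fin]
  have : Fact (Nat.Prime 2) := ⟨Nat.prime_two⟩
  rw [IsPM, hinv, hfix, Perm.pow_prime_eq_one_iff, Multiset.eq_replicate]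
  constructor
  · rintro ⟨h2, hsum⟩
    refine ⟨?_, h2⟩
    rw [Multiset.eq_replicate_card.2 h2, Multiset.sum_replicate, smul_eq_mul] at hsum
    omega
  · rintro ⟨hcard, h2⟩
    refine ⟨h2, ?_⟩
    rw [Multiset.eq_replicate.2 ⟨hcard, h2⟩, Multiset.sum_replicate, smul_eq_mul, mul_comm]

namespace PMV

theorem card (n : ℕ) : Fintype.card (PMV n) = (2 * n - 1)‼ := by
  have hcount := Perm.card_of_cycleType_mul_eq (α := Fin (2 * n)) (Multiset.replicate n 2)
  have hprod :
      ∏ k ∈ (Multiset.replicate n 2).toFinset, ((Multiset.replicate n 2).count k)! = n ! := by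
    rcases n with _ | n
    · rfl
    · rw [Multiset.toFinset_replicate, if_neg n.succ_ne_zero, prod_singleton,
        Multiset.count_replicate_self]
  simp only [Fintype.card_fin, Multiset.sum_replicate, smul_eq_mul, hprod,
    Multiset.prod_replicate, mul_comm n 2, Nat.sub_self, Nat.factorial_zero, one_mul,
    ← Nat.doubleFactorial_two_mul, Nat.factorial_two_mul_eq_mul_doubleFactorial] at hcount
  rw [if_pos (by simp [Multiset.mem_replicate, mul_comm]), mul_comm] at hcount
  rw [Fintype.card_subtype, ← Nat.eq_of_mul_eq_mul_left (Nat.doubleFactorial_pos _) hcount]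
  simp only [isPM_iff_cycleType_eq]

instance (n : ℕ) : MulAction (ConjAct (Perm (Fin (2 * n)))) (PMV n) where
  smul g M := ⟨g • M.1, by
    rw [ConjAct.smul_def, isPM_iff_cycleType_eq, Perm.cycleType_conj, ← isPM_iff_cycleType_eq]
    exact M.2⟩
  one_smul M := Subtype.ext (one_smul _ M.1)
  mul_smul g h M := Subtype.ext (mul_smul g h M.1)

theorem coe_smul {n : ℕ} (g : ConjAct (Perm (Fin (2 * n)))) (M : PMV n) :
    ((g • M : PMV n) : Perm (Fin (2 * n))) = g • (M : Perm (Fin (2 * n))) := rfl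

instance (n : ℕ) : MulAction.IsPretransitive (ConjAct (Perm (Fin (2 * n)))) (PMV n) where
  exists_smul_eq M M' := by
    have hconj : IsConj M.1 M'.1 := by
      rw [Perm.isConj_iff_cycleType_eq, (isPM_iff_cycleType_eq _).1 M.2,
        (isPM_iff_cycleType_eq _).1 M'.2]
    obtain ⟨c, hc⟩ := isConj_iff.1 hconj
    exact ⟨ConjAct.toConjAct c, Subtype.ext hc⟩

def edgeDisjointGraph (n : ℕ) : SimpleGraph (PMV n) where
  Adj M M' := M ≠ M' ∧ ∀ i, M.1 i ≠ M'.1 i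
  symm := ⟨fun _ _ h => ⟨h.1.symm, fun i => (h.2 i).symm⟩⟩
  loopless := ⟨fun _ h => h.1 rfl⟩

theorem edgeDisjointGraph_adj {n : ℕ} {M M' : PMV n} :
    (edgeDisjointGraph n).Adj M M' ↔ M ≠ M' ∧ ∀ i, M.1 i ≠ M'.1 i := Iff.rfl

theorem edgeDisjointGraph_adj_smul {n : ℕ} (g : ConjAct (Perm (Fin (2 * n)))) {M M' : PMV n}
    (h : (edgeDisjointGraph n).Adj M M') : (edgeDisjointGraph n).Adj (g • M) (g • M') := by
  refine edgeDisjointGraph_adj.2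
    ⟨(MulAction.injective g).ne h.1, fun i hi => h.2 ((ConjAct.ofConjAct g)⁻¹ i) ?_⟩
  simpa [coe_smul, ConjAct.smul_def] using hi

end PMV

section RoundRobin
variable {R : Type*} [CommRing R] [DecidableEq R]

/-- Round `k` of the round-robin tournament on `R ∪ {∞}`, with `none` as `∞`. -/
def roundRobin (k : R) : Option R → Option R
  | none => some k
  | some i => if i = k then none else some (2 * k - i)

theorem roundRobin_involutive (k : R) : Function.Involutive (roundRobin k) := by
  rintro (_ | i)
  · simp [roundRobin]
  · by_cases hik : i = k
    · simp [roundRobin, hik]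
    · have : 2 * k - i ≠ k := fun h => hik (by linear_combination -h)
      simp [roundRobin, hik, this]

theorem roundRobin_ne_self (h2 : IsLeftRegular (2 : R)) (k : R) (x : Option R) :
    roundRobin k x ≠ x := by
  rcases x with _ | i
  · simp [roundRobin]
  · by_cases hik : i = k
    · simp [roundRobin, hik]
    · simp only [roundRobin, hik, if_false, ne_eq, Option.some.injEq]
      exact fun h => hik (h2 (by linear_combination -h))

theorem roundRobin_ne (h2 : IsLeftRegular (2 : R)) {k l : R} (hkl : k ≠ l) (x : Option R) :
    roundRobin k x ≠ roundRobin l x := by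
  rcases x with _ | i
  · simpa [roundRobin] using hkl
  · by_cases hik : i = k
    · subst hik
      simp [roundRobin, hkl]
    · by_cases hil : i = l
      · subst hil
        simp [roundRobin, hik]
      · simp only [roundRobin, hik, hil, if_false, ne_eq, Option.some.injEq]
        exact fun h => hkl (h2 (by linear_combination h))

end RoundRobin

theorem PMV.exists_isClique_edgeDisjointGraph {n : ℕ} (hn : 0 < n) :
    ∃ C : Finset (PMV n), #C = 2 * n - 1 ∧
      (edgeDisjointGraph n).IsClique (C : Set (PMV n)) := by
  set m := 2 * n - 1
  have : NeZero m := ⟨by omega⟩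
  have h2 : IsLeftRegular (2 : ZMod m) :=
    (ZMod.unitOfCoprime 2 (Nat.coprime_two_left.2 (by grind))).isUnit.isRegular.left
  let e : Option (ZMod m) ≃ Fin (2 * n) := Fintype.equivOfCardEq (by simp [ZMod.card]; omega)
  let M (k : ZMod m) : PMV n := ⟨e.permCongr (roundRobin_involutive k).toPerm, by
    refine ⟨fun i => by simp [roundRobin_involutive k _], fun i h => ?_⟩
    exact roundRobin_ne_self h2 k (e.symm i) (by simpa using congrArg e.symm h)⟩
  have hadj {k l : ZMod m} (hkl : k ≠ l) : (edgeDisjointGraph n).Adj (M k) (M l) := by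
    have hdisj (i : Fin (2 * n)) : (M k).1 i ≠ (M l).1 i := fun h =>
      roundRobin_ne h2 hkl (e.symm i) (by simpa [M] using congrArg e.symm h)
    exact edgeDisjointGraph_adj.2 ⟨fun h => hdisj (e none) (by rw [h]), hdisj⟩
  have hinj : Function.Injective M := fun k l h => by_contra fun hkl => (hadj hkl).ne h
  refine ⟨univ.image M, by rw [card_image_of_injective _ hinj, card_univ, ZMod.card], ?_⟩
  rw [coe_image, coe_univ, Set.image_univ]
  rintro _ ⟨k, rfl⟩ _ ⟨l, rfl⟩ hkl
  exact hadj fun h => hkl (congrArg M h)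

/-- Erdős–Ko–Rado bound for perfect matchings: an intersecting family of perfect
matchings of `K_{2n}` (any two members share an edge) has size at most `(2(n-1)-1)!!`. -/
theorem EKR_matchings_bound (n : ℕ) (F : Finset (PMV n))
    (hF : ∀ m ∈ F, ∀ m' ∈ F, ∃ i, m.1 i = m'.1 i) :
    F.card ≤ (2 * (n - 1) - 1)‼ := by
  rcases Nat.eq_zero_or_pos n with rfl | hn
  · simpa [PMV.card] using F.card_le_univ
  have hI : (PMV.edgeDisjointGraph n).IsIndepSet (F : Set (PMV n)) :=
    fun M hM M' hM' _ hadj => by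
      obtain ⟨i, hi⟩ := hF M hM M' hM'
      exact (PMV.edgeDisjointGraph_adj.1 hadj).2 i hi
  obtain ⟨C, hCcard, hC⟩ := PMV.exists_isClique_edgeDisjointGraph hn
  have hbound := SimpleGraph.card_mul_card_le_card_of_isClique_of_isIndepSet
    PMV.edgeDisjointGraph_adj_smul hC hI
  have hdf : (2 * n - 1)‼ = (2 * n - 1) * (2 * (n - 1) - 1)‼ := by
    rw [show 2 * n - 1 = 2 * n - 2 + 1 by omega, Nat.doubleFactorial_add_one,
      show 2 * n - 2 - 1 = 2 * (n - 1) - 1 by omega]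
  rw [hCcard, PMV.card, hdf] at hbound
  exact Nat.le_of_mul_le_mul_left hbound (by omega)
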